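/- arXiv:1703.02001 — 3 statements merged into one kernel-verified Lean document; each statement's English description precedes it below -/
import Mathlib

section
/- Let V be a finite-dimensional real vector space and let A, B ⊆ V be cones such that: (1) A is a closed convex cone which is strictly convex, i.e. A ∩ (−A) ⊆ {0}; (2) B = B⁺ ∪ (−B⁺), where B⁺ is a nonempty open convex cone with 0 ∉ B⁺ and B⁺ ∩ (−B⁺) = ∅ (so B is open with the two convex connected components B⁺ and −B⁺, exchanged by negation); (3) for every a ∈ B one has a ∈ A or −a ∈ A. Then A ∩ B is exactly one of the two connected components of B, i.e. A ∩ B = B⁺ or A ∩ B = −B⁺. (This is Lemma 4.1 of the paper, with the negation-symmetry of B, implicit in the paper and satisfied in its application to positivity cones of quadratic forms, made explicit.) -/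
/-!
`B⁺` is convex, hence preconnected, and by hypothesis it is covered by the closed sets `A` and
`-A`, which meet only at `0 ∉ B⁺`. So `B⁺` lies entirely in `A` or entirely in `-A`; strict
convexity of `A` then forces `A ∩ (B⁺ ∪ -B⁺)` to be `B⁺` or `-B⁺` respectively.
-/

open Set

theorem IsPreconnected.subset_or_subset_of_isClosed {X : Type*} [TopologicalSpace X]
    {s u v : Set X} (hs : IsPreconnected s) (hu : IsClosed u) (hv : IsClosed v)
    (hsuv : s ⊆ u ∪ v) (huv : Disjoint s (u ∩ v)) : s ⊆ u ∨ s ⊆ v := by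
  by_contra! h
  obtain ⟨⟨x, hxs, hxu⟩, ⟨y, hys, hyv⟩⟩ := And.imp not_subset.mp not_subset.mp h
  have hxv : x ∈ v := (hsuv hxs).resolve_left hxu
  have hyu : y ∈ u := (hsuv hys).resolve_right hyv
  exact not_disjoint_iff_nonempty_inter.mpr
    (isPreconnected_closed_iff.mp hs u v hu hv hsuv ⟨y, hys, hyu⟩ ⟨x, hxs, hxv⟩) huv

theorem IsPreconnected.subset_or_subset_neg {V : Type*} [TopologicalSpace V] [Zero V]
    [InvolutiveNeg V] [ContinuousNeg V] {s A : Set V} (hs : IsPreconnected s)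
    (hA : IsClosed A) (hAneg : A ∩ -A ⊆ {0}) (hs0 : (0 : V) ∉ s) (hsA : s ⊆ A ∪ -A) :
    s ⊆ A ∨ s ⊆ -A :=
  hs.subset_or_subset_of_isClosed hA hA.neg hsA <|
    disjoint_left.mpr fun _ hxs hxA => hs0 (hAneg hxA ▸ hxs)

theorem inter_union_neg_eq_of_subset {V : Type*} [SubtractionMonoid V] {s A : Set V}
    (hsA : s ⊆ A) (hAneg : A ∩ -A ⊆ {0}) (hs0 : (0 : V) ∉ s) : A ∩ (s ∪ -s) = s := by
  refine Subset.antisymm ?_ fun x hx => ⟨hsA hx, Or.inl hx⟩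
  rintro x ⟨hxA, hxs | hxs⟩
  · exact hxs
  · have hx0 : x = 0 := hAneg ⟨hxA, hsA hxs⟩
    exact absurd (by simpa [hx0] using hxs) hs0

theorem stmt_0_general {V : Type*} [NormedAddCommGroup V] [NormedSpace ℝ V]
    (A Bp : Set V)
    (hAclosed : IsClosed A)
    (hAstrict : A ∩ (-A) ⊆ {0})
    (hBpconvex : Convex ℝ Bp)
    (hBp0 : (0 : V) ∉ Bp)
    (halt : ∀ a ∈ Bp ∪ (-Bp), a ∈ A ∨ -a ∈ A) :
    A ∩ (Bp ∪ (-Bp)) = Bp ∨ A ∩ (Bp ∪ (-Bp)) = -Bp := by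
  have hcover : Bp ⊆ A ∪ -A := fun x hx => halt x (Or.inl hx)
  rcases hBpconvex.isPreconnected.subset_or_subset_neg hAclosed hAstrict hBp0 hcover with h | h
  · exact Or.inl (inter_union_neg_eq_of_subset h hAstrict hBp0)
  · have hneg : -Bp ⊆ A := neg_subset.mpr h
    have hcomp := inter_union_neg_eq_of_subset hneg hAstrict (by simpa using hBp0)
    rw [neg_neg, union_comm] at hcomp
    exact Or.inr hcomp

/-- Lemma 4.1 of the paper: if `A` is a closed, strictly convex cone, `B = B⁺ ∪ (-B⁺)` is an
open cone with two convex connected components exchanged by negation, and every element of `B`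
lies in `A` up to sign, then `A ∩ B` is exactly one of the two components of `B`. -/
theorem stmt_0 {V : Type*} [NormedAddCommGroup V] [NormedSpace ℝ V] [FiniteDimensional ℝ V]
    (A Bp : Set V)
    (hAclosed : IsClosed A) (hAconvex : Convex ℝ A)
    (hAcone : ∀ c : ℝ, 0 < c → ∀ x ∈ A, c • x ∈ A)
    (hAstrict : A ∩ (-A) ⊆ {0})
    (hBpne : Bp.Nonempty) (hBpopen : IsOpen Bp) (hBpconvex : Convex ℝ Bp)
    (hBpcone : ∀ c : ℝ, 0 < c → ∀ x ∈ Bp, c • x ∈ Bp)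
    (hBp0 : (0 : V) ∉ Bp) (hBpdisj : Bp ∩ (-Bp) = ∅)
    (halt : ∀ a ∈ Bp ∪ (-Bp), a ∈ A ∨ -a ∈ A) :
    A ∩ (Bp ∪ (-Bp)) = Bp ∨ A ∩ (Bp ∪ (-Bp)) = -Bp :=
  stmt_0_general A Bp hAclosed hAstrict hBpconvex hBp0 halt
end

section
/- Let V be a finite-dimensional real vector space, let A ⊆ V be a closed convex cone with A ∩ (−A) ⊆ {0}, and let C ⊆ V be a convex set with 0 ∉ C and C ⊆ A ∪ (−A). If C ∩ A ≠ ∅, then C ⊆ A. (This is the core step in the proof of Lemma 4.1 of the paper: along the segment from a point b₀ ∈ C ∩ A to any b₁ ∈ C, the alternative b_t ∈ A or −b_t ∈ A together with closedness and strict convexity of A forces every point, in particular b₁, to lie in A.) -/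
/-! A convex set is connected; `A` and `-A` are closed, cover `C` and meet only in `0 ∉ C`, so they
would disconnect `C` unless one of them contains it. -/

theorem IsPreconnected.subset_left_of_subset_union_of_isClosed {X : Type*} [TopologicalSpace X]
    {s t t' : Set X} (hs : IsPreconnected s) (ht : IsClosed t) (ht' : IsClosed t')
    (hdisj : Disjoint s (t ∩ t')) (hst : s ⊆ t ∪ t') (hsne : (s ∩ t).Nonempty) : s ⊆ t := by
  intro x hxs
  by_contra hxt
  have hxt' : x ∈ t' := (hst hxs).resolve_left hxt
  have hmeet := isPreconnected_closed_iff.1 hs t t' ht ht' hst hsne ⟨x, hxs, hxt'⟩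
  exact hmeet.not_disjoint hdisj

theorem stmt_1_general {V : Type*} [NormedAddCommGroup V] [NormedSpace ℝ V]
    (A C : Set V)
    (hAclosed : IsClosed A)
    (hAstrict : A ∩ (-A) ⊆ {0})
    (hCconvex : Convex ℝ C) (hC0 : (0 : V) ∉ C)
    (hCsub : C ⊆ A ∪ (-A))
    (hCA : (C ∩ A).Nonempty) :
    C ⊆ A := by
  have hdisj : Disjoint C (A ∩ -A) :=
    Set.disjoint_left.2 fun x hxC hxA => hC0 (Set.mem_singleton_iff.1 (hAstrict hxA) ▸ hxC)
  exact hCconvex.isPreconnected.subset_left_of_subset_union_of_isClosed hAclosed hAclosed.neg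
    hdisj hCsub hCA

/-- Core step of Lemma 4.1 of the paper: if `A` is a closed, strictly convex cone and `C` is a
convex set avoiding `0` with `C ⊆ A ∪ (-A)`, then `C` meets `A` only if it is contained in `A`. -/
theorem stmt_1 {V : Type*} [NormedAddCommGroup V] [NormedSpace ℝ V] [FiniteDimensional ℝ V]
    (A C : Set V)
    (hAclosed : IsClosed A) (hAconvex : Convex ℝ A)
    (hAcone : ∀ c : ℝ, 0 < c → ∀ x ∈ A, c • x ∈ A)
    (hAstrict : A ∩ (-A) ⊆ {0})
    (hCconvex : Convex ℝ C) (hC0 : (0 : V) ∉ C)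
    (hCsub : C ⊆ A ∪ (-A))
    (hCA : (C ∩ A).Nonempty) :
    C ⊆ A :=
  stmt_1_general A C hAclosed hAstrict hCconvex hC0 hCsub hCA
end

section
/- Let V be a finite-dimensional real vector space with a symmetric bilinear form B of signature (1, dim V − 1), let Q(x) := B(x,x), let e ∈ V with Q(e) > 0 realize the signature decomposition, and set C := {x ∈ V : Q(x) > 0} and C⁺ := {x ∈ C : B(x,e) > 0}. Let A ⊆ V be a closed convex cone with A ∩ (−A) ⊆ {0} such that for every x ∈ C one has x ∈ A or −x ∈ A. Then A ∩ C = C⁺ or A ∩ C = −C⁺; that is, A ∩ C consists of exactly one of the two connected components of C. (This is the abstract statement behind Lemma 4.2 of the paper: the intersection of the pseudo-effective cone with the cone of positive (1,1)-classes is exactly one connected component of the latter, defining the positive cone 𝒞_X⁺.) -/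
/-!
The half `C⁺` of the positive cone is star-convex about `e`, hence connected. Since `A` and `-A`
are closed, cover `C⁺`, and meet only at `0 ∉ C⁺`, connectedness puts `C⁺` inside `A` or inside
`-A`. If `C⁺ ⊆ A`, no `x ∈ A ∩ C` can have `B(x, e) < 0`, for then `-x ∈ C⁺ ⊆ A` would force
`x = 0`; the case `C⁺ ⊆ -A` is the same argument applied to `-A`.
-/

open Set

section PosCone

variable {V : Type*} [AddCommGroup V] [Module ℝ V] (B : V →ₗ[ℝ] V →ₗ[ℝ] ℝ) (e : V)

def posCone : Set V := {x | 0 < B x x}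

def posConeComponent : Set V := {x | 0 < B x x ∧ 0 < B x e}

variable {B e}

@[simp]
lemma neg_mem_posCone {x : V} : -x ∈ posCone B ↔ x ∈ posCone B := by
  simp [posCone]

@[simp]
lemma neg_posCone : -posCone B = posCone B := by
  ext x
  simp only [mem_neg, neg_mem_posCone]

lemma ne_zero_of_mem_posCone {x : V} (hx : x ∈ posCone B) : x ≠ 0 := by
  rintro rfl
  simp [posCone] at hx

lemma apply_ne_zero_of_mem_posCone (hneg : ∀ x, B x e = 0 → x ≠ 0 → B x x < 0) {x : V}
    (hx : x ∈ posCone B) : B x e ≠ 0 := fun h =>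
  (hneg x h (ne_zero_of_mem_posCone hx)).not_gt hx

lemma starConvex_posConeComponent (hsymm : ∀ x y, B x y = B y x) (he : 0 < B e e) :
    StarConvex ℝ e (posConeComponent B e) := by
  rintro y ⟨hy, hye⟩ a b ha hb hab
  have hquad : B (a • e + b • y) (a • e + b • y) =
      a ^ 2 * B e e + 2 * (a * b) * B y e + b ^ 2 * B y y := by
    simp only [map_add, map_smul, LinearMap.add_apply, LinearMap.smul_apply, smul_eq_mul,
      hsymm e y]
    ring
  have hlin : B (a • e + b • y) e = a * B e e + b * B y e := by
    simp only [map_add, map_smul, LinearMap.add_apply, LinearMap.smul_apply, smul_eq_mul]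
  rcases ha.eq_or_lt with rfl | ha
  · obtain rfl : b = 1 := by linarith
    simpa only [zero_smul, one_smul, zero_add] using ⟨hy, hye⟩
  refine ⟨?_, ?_⟩
  · rw [hquad]
    nlinarith [mul_pos (pow_pos ha 2) he, mul_nonneg (mul_nonneg ha.le hb) hye.le,
      mul_nonneg (sq_nonneg b) hy.le]
  · rw [hlin]
    nlinarith [mul_pos ha he, mul_nonneg hb hye.le]

lemma inter_posCone_eq_of_posConeComponent_subset
    (hneg : ∀ x, B x e = 0 → x ≠ 0 → B x x < 0) {A : Set V} (hAstrict : A ∩ (-A) ⊆ {0})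
    (hsub : posConeComponent B e ⊆ A) : A ∩ posCone B = posConeComponent B e := by
  ext x
  refine ⟨fun ⟨hxA, hx⟩ => ⟨hx, ?_⟩, fun hx => ⟨hsub hx, hx.1⟩⟩
  by_contra! hle
  have hlt : B x e < 0 := hle.lt_of_ne (apply_ne_zero_of_mem_posCone hneg hx)
  have hnegx : -x ∈ posConeComponent B e := by
    refine ⟨neg_mem_posCone.2 hx, ?_⟩
    simpa only [map_neg, LinearMap.neg_apply, neg_pos] using hlt
  exact ne_zero_of_mem_posCone hx (hAstrict ⟨hxA, hsub hnegx⟩)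

end PosCone

theorem stmt_3_general {V : Type*} [NormedAddCommGroup V] [NormedSpace ℝ V]
    (B : V →ₗ[ℝ] V →ₗ[ℝ] ℝ) (hsymm : ∀ x y, B x y = B y x)
    (e : V) (he : 0 < B e e)
    (hneg : ∀ x, B x e = 0 → x ≠ 0 → B x x < 0)
    (A : Set V)
    (hAclosed : IsClosed A)
    (hAstrict : A ∩ (-A) ⊆ {0})
    (halt : ∀ x : V, 0 < B x x → x ∈ A ∨ -x ∈ A) :
    A ∩ {x | 0 < B x x} = {x | 0 < B x x ∧ 0 < B x e} ∨
      A ∩ {x | 0 < B x x} = -{x | 0 < B x x ∧ 0 < B x e} := by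
  have hconn : IsPreconnected (posConeComponent B e) :=
    ((starConvex_posConeComponent hsymm he).isPathConnected ⟨he, he⟩).isConnected.isPreconnected
  have hcover : posConeComponent B e ⊆ A ∪ -A := fun x hx => halt x hx.1
  have hdisj : posConeComponent B e ∩ (A ∩ -A) = ∅ :=
    eq_empty_of_forall_notMem fun x ⟨hx, hxA⟩ => ne_zero_of_mem_posCone hx.1 (hAstrict hxA)
  rcases isPreconnected_iff_subset_of_disjoint_closed.mp hconn A (-A) hAclosed hAclosed.neg
    hcover hdisj with hsub | hsub
  · exact .inl (inter_posCone_eq_of_posConeComponent_subset hneg hAstrict hsub)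
  · right
    have hAstrict' : -A ∩ -(-A) ⊆ {0} := by rwa [neg_neg, inter_comm]
    have hnegA := inter_posCone_eq_of_posConeComponent_subset hneg hAstrict' hsub
    change A ∩ posCone B = -posConeComponent B e
    rw [← hnegA, inter_neg, neg_neg, neg_posCone]

/-- Abstract form of Lemma 4.2 of the paper: if `B` is a symmetric bilinear form of signature
`(1, dim V - 1)` realized by `e`, `C = {Q > 0}`, `C⁺ = {x ∈ C : B(x,e) > 0}`, and `A` is a
closed strictly convex cone containing every element of `C` up to sign, then `A ∩ C` is
exactly one of the two connected components `C⁺`, `-C⁺` of `C`. -/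
theorem stmt_3 {V : Type*} [NormedAddCommGroup V] [NormedSpace ℝ V] [FiniteDimensional ℝ V]
    (B : V →ₗ[ℝ] V →ₗ[ℝ] ℝ) (hsymm : ∀ x y, B x y = B y x)
    (e : V) (he : 0 < B e e)
    (hneg : ∀ x, B x e = 0 → x ≠ 0 → B x x < 0)
    (A : Set V)
    (hAclosed : IsClosed A) (hAconvex : Convex ℝ A)
    (hAcone : ∀ c : ℝ, 0 < c → ∀ x ∈ A, c • x ∈ A)
    (hAstrict : A ∩ (-A) ⊆ {0})
    (halt : ∀ x : V, 0 < B x x → x ∈ A ∨ -x ∈ A) :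
    A ∩ {x | 0 < B x x} = {x | 0 < B x x ∧ 0 < B x e} ∨
      A ∩ {x | 0 < B x x} = -{x | 0 < B x x ∧ 0 < B x e} :=
  stmt_3_general B hsymm e he hneg A hAclosed hAstrict halt
end
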